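/- Let W be a real symmetric m×m matrix satisfying 1ᵀW = 1ᵀ, W1 = 1 and ρ(W − 11ᵀ/m) < 1, and set λ₂ := ρ(W − 11ᵀ/m). Let z₀ ∈ ℝᵐ, let ε₀, …, ε_t be vectors in ℝᵐ, and define z_{t+1} := W^{t+1}z₀ + Σ_{s=0}^{t} Wˢ(W−I)ε_{t−s}. Then ‖z_{t+1} − (11ᵀ/m)z₀‖ ≤ λ₂^{t+1}·‖z₀ − (11ᵀ/m)z₀‖ + Σ_{l=0}^{t} λ₂^{t−l}·‖W − I‖·‖ε_l − (11ᵀ/m)ε_l‖, where the matrix norms are spectral (operator 2-)norms and the vector norms Euclidean. -/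

import Mathlib

open Matrix Finset

/-- The m×m averaging matrix `11ᵀ/m`. -/
noncomputable def avgMat (m : ℕ) : Matrix (Fin m) (Fin m) ℝ := Matrix.of fun _ _ => (1 : ℝ) / m

/-- The spectral (operator 2-)norm of a real square matrix. -/
noncomputable def spNorm {m : ℕ} (M : Matrix (Fin m) (Fin m) ℝ) : ℝ :=
  ‖Matrix.toEuclideanCLM (𝕜 := ℝ) M‖

/-- The Euclidean norm of a vector in `ℝᵐ`. -/
noncomputable def eucNorm {m : ℕ} (v : Fin m → ℝ) : ℝ := Real.sqrt (∑ i, v i ^ 2)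

/-! With `J = 11ᵀ/m`, the hypotheses give `WJ = J`, and by symmetry also `JW = J`; as `J² = J`,
`W` commutes with `1 - J` and `W - J = W(1 - J)`, so `Wˢ(1 - J) = (W - J)ˢ(1 - J)`. Since
`(W - I)J = 0` and `J(W - I) = 0`, this rewrites `z_{t+1} - Jz₀` as
`(W - J)^{t+1}(z₀ - Jz₀) + Σₛ (W - J)ˢ(W - I)(ε_{t-s} - Jε_{t-s})`, and the triangle inequality
bounds it with `‖W - J‖` in place of `λ₂`. For the symmetric matrix `W - J` the spectral norm is
the spectral radius `λ₂`. -/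

section Projection

variable {R : Type*} [Ring R] {W J : R}

theorem pow_mul_eq_of_mul_eq (hWJ : W * J = J) (n : ℕ) : W ^ n * J = J := by
  induction n with
  | zero => rw [pow_zero, one_mul]
  | succ n ih => rw [pow_succ, mul_assoc, hWJ, ih]

theorem pow_mul_one_sub_eq (hWJ : W * J = J) (hJW : J * W = J) (hJ : IsIdempotentElem J)
    (n : ℕ) : W ^ n * (1 - J) = (W - J) ^ n * (1 - J) := by
  have hA : W - J = W * (1 - J) := by rw [mul_sub, mul_one, hWJ]
  have hcomm : Commute W (1 - J) := by
    rw [commute_iff_eq, mul_sub, sub_mul, hWJ, hJW, mul_one, one_mul]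
  rw [hA, hcomm.mul_pow, mul_assoc, ← pow_succ, hJ.one_sub.pow_succ_eq]

theorem pow_succ_sub_eq (hWJ : W * J = J) (hJW : J * W = J) (hJ : IsIdempotentElem J)
    (n : ℕ) : W ^ (n + 1) - J = (W - J) ^ (n + 1) * (1 - J) := by
  rw [← pow_mul_one_sub_eq hWJ hJW hJ, mul_sub, mul_one, pow_mul_eq_of_mul_eq hWJ]

theorem pow_mul_sub_one_eq (hWJ : W * J = J) (hJW : J * W = J) (hJ : IsIdempotentElem J)
    (n : ℕ) : W ^ n * (W - 1) = (W - J) ^ n * (W - 1) * (1 - J) := by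
  have hleft : (1 - J) * (W - 1) = W - 1 := by
    simp only [sub_mul, mul_sub, one_mul, mul_one, hJW]; abel
  have hright : (W - 1) * (1 - J) = W - 1 := by
    simp only [sub_mul, mul_sub, one_mul, mul_one, hWJ]; abel
  rw [← hleft, ← mul_assoc, pow_mul_one_sub_eq hWJ hJW hJ, mul_assoc, hleft, mul_assoc, hright]

end Projection

section Operator

variable {𝕜 E : Type*} [NontriviallyNormedField 𝕜] [SeminormedAddCommGroup E] [NormedSpace 𝕜 E]

theorem ContinuousLinearMap.norm_pow_apply_le (T : E →L[𝕜] E) (n : ℕ) (x : E) :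
    ‖(T ^ n) x‖ ≤ ‖T‖ ^ n * ‖x‖ := by
  induction n with
  | zero => simp
  | succ n ih =>
    rw [pow_succ', mul_apply_eq_comp, pow_succ', mul_assoc]
    exact (T.le_opNorm _).trans (mul_le_mul_of_nonneg_left ih (norm_nonneg T))

theorem norm_noisy_consensus_sub_le (W J : E →L[𝕜] E) (hWJ : W * J = J) (hJW : J * W = J)
    (hJ : IsIdempotentElem J) (z₀ : E) (ε : ℕ → E) (t : ℕ) :
    ‖(W ^ (t + 1)) z₀ + ∑ s ∈ range (t + 1), (W ^ s * (W - 1)) (ε (t - s)) - J z₀‖ ≤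
      ‖W - J‖ ^ (t + 1) * ‖z₀ - J z₀‖ +
        ∑ l ∈ range (t + 1), ‖W - J‖ ^ (t - l) * ‖W - 1‖ * ‖ε l - J (ε l)‖ := by
  have hdecomp : (W ^ (t + 1)) z₀ + ∑ s ∈ range (t + 1), (W ^ s * (W - 1)) (ε (t - s)) - J z₀ =
      ((W - J) ^ (t + 1)) (z₀ - J z₀) +
        ∑ s ∈ range (t + 1), ((W - J) ^ s) ((W - 1) (ε (t - s) - J (ε (t - s)))) := by
    have hz₀ : (W ^ (t + 1)) z₀ - J z₀ = ((W - J) ^ (t + 1)) (z₀ - J z₀) := by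
      rw [← _root_.sub_apply, pow_succ_sub_eq hWJ hJW hJ, mul_apply_eq_comp, _root_.sub_apply 1 J,
        one_apply_eq_self]
    have hε (s : ℕ) (x : E) : (W ^ s * (W - 1)) x = ((W - J) ^ s) ((W - 1) (x - J x)) := by
      rw [pow_mul_sub_one_eq hWJ hJW hJ, mul_apply_eq_comp, mul_apply_eq_comp, _root_.sub_apply 1 J,
        one_apply_eq_self]
    rw [add_sub_right_comm, hz₀, sum_congr rfl fun s _ => hε s _]
  have hterm (s : ℕ) (x : E) : ‖((W - J) ^ s) ((W - 1) x)‖ ≤ ‖W - J‖ ^ s * ‖W - 1‖ * ‖x‖ := by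
    rw [mul_assoc]
    exact ((W - J).norm_pow_apply_le s _).trans
      (mul_le_mul_of_nonneg_left ((W - 1).le_opNorm x) (by positivity))
  calc _ ≤ ‖((W - J) ^ (t + 1)) (z₀ - J z₀)‖ +
        ∑ s ∈ range (t + 1), ‖((W - J) ^ s) ((W - 1) (ε (t - s) - J (ε (t - s))))‖ := by
        rw [hdecomp]; exact (norm_add_le _ _).trans (by gcongr; exact norm_sum_le _ _)
    _ ≤ ‖W - J‖ ^ (t + 1) * ‖z₀ - J z₀‖ + ∑ s ∈ range (t + 1),
        ‖W - J‖ ^ s * ‖W - 1‖ * ‖ε (t - s) - J (ε (t - s))‖ :=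
        add_le_add ((W - J).norm_pow_apply_le _ _) (sum_le_sum fun s _ => hterm s _)
    _ = _ := by
        rw [← sum_range_reflect]
        refine congrArg _ (sum_congr rfl fun l hl => ?_)
        have hlt : l ≤ t := Nat.lt_succ_iff.mp (mem_range.mp hl)
        rw [add_tsub_cancel_right, Nat.sub_sub_self hlt]

end Operator

theorem Matrix.IsSymm.mul_eq_of_mul_eq {n α : Type*} [Fintype n] [CommSemiring α]
    {W J : Matrix n n α} (hW : W.IsSymm) (hJ : J.IsSymm) (h : W * J = J) : J * W = J := by
  rw [← hJ.eq, ← hW.eq, ← transpose_mul, h]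

theorem isSymm_avgMat (m : ℕ) : (avgMat m).IsSymm := rfl

theorem isIdempotentElem_avgMat (m : ℕ) : IsIdempotentElem (avgMat m) := by
  ext i j
  have hm : (m : ℝ) ≠ 0 := Nat.cast_ne_zero.mpr i.pos.ne'
  simp only [avgMat, mul_apply, of_apply, sum_const, card_univ, Fintype.card_fin, nsmul_eq_mul]
  field_simp

theorem mul_avgMat_of_mulVec_one {m : ℕ} {W : Matrix (Fin m) (Fin m) ℝ}
    (hrow : W *ᵥ (fun _ => 1) = fun _ => 1) : W * avgMat m = avgMat m := by
  ext i j
  have hi : ∑ k, W i k = 1 := by simpa [mulVec, dotProduct] using congrFun hrow i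
  simp [avgMat, mul_apply, ← sum_mul, hi]

theorem spNorm_eq_toReal_spectralRadius {m : ℕ} {A : Matrix (Fin m) (Fin m) ℝ} (hA : A.IsSymm) :
    spNorm A = (spectralRadius ℝ A).toReal := by
  have hT : IsSelfAdjoint (toEuclideanCLM (𝕜 := ℝ) A) :=
    (isHermitian_iff_isSymm.mpr hA).isSelfAdjoint.map _
  rw [spNorm, spectralRadius, ← AlgEquiv.spectrum_eq (toEuclideanCLM (𝕜 := ℝ)) A,
    ← spectralRadius, ContinuousLinearMap.spectralRadius_eq_nnnorm _ hT]
  simp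

theorem eucNorm_eq_norm_toLp {m : ℕ} (v : Fin m → ℝ) : eucNorm v = ‖WithLp.toLp 2 v‖ := by
  rw [eucNorm, EuclideanSpace.norm_eq]
  simp [Real.norm_eq_abs, sq_abs]

theorem prop2_deterministic_estimate_general {m : ℕ}
    (W : Matrix (Fin m) (Fin m) ℝ) (hsym : W.IsSymm)
    (hrow : W.mulVec (fun _ => (1 : ℝ)) = fun _ => 1)
    (lam2 : ℝ) (hlam2 : lam2 = (spectralRadius ℝ (W - avgMat m)).toReal)
    (z₀ : Fin m → ℝ) (ε : ℕ → Fin m → ℝ) (t : ℕ) (zt1 : Fin m → ℝ)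
    (hz : zt1 = (W ^ (t + 1)).mulVec z₀ +
        ∑ s ∈ Finset.range (t + 1), (W ^ s * (W - 1)).mulVec (ε (t - s))) :
    eucNorm (zt1 - (avgMat m).mulVec z₀) ≤
      lam2 ^ (t + 1) * eucNorm (z₀ - (avgMat m).mulVec z₀) +
      ∑ l ∈ Finset.range (t + 1),
        lam2 ^ (t - l) * spNorm (W - 1) * eucNorm (ε l - (avgMat m).mulVec (ε l)) := by
  have hWJ : W * avgMat m = avgMat m := mul_avgMat_of_mulVec_one hrow
  have hJW : avgMat m * W = avgMat m := hsym.mul_eq_of_mul_eq (isSymm_avgMat m) hWJ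
  have hlam : lam2 = spNorm (W - avgMat m) := by
    rw [hlam2, spNorm_eq_toReal_spectralRadius (hsym.sub (isSymm_avgMat m))]
  let T := toEuclideanCLM (n := Fin m) (𝕜 := ℝ)
  have key := norm_noisy_consensus_sub_le (T W) (T (avgMat m))
    (by rw [← map_mul, hWJ]) (by rw [← map_mul, hJW]) ((isIdempotentElem_avgMat m).map T)
    (WithLp.toLp 2 z₀) (fun l => WithLp.toLp 2 (ε l)) t
  subst hz hlam
  simp only [eucNorm_eq_norm_toLp, spNorm, WithLp.toLp_sub, WithLp.toLp_add, WithLp.toLp_sum,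
    ← toEuclideanCLM_toLp, map_pow, map_mul, map_sub, map_one]
  exact key

/-- For a real symmetric `m×m` matrix `W` with `1ᵀW = 1ᵀ`, `W1 = 1`,
`ρ(W − 11ᵀ/m) < 1`, `λ₂ := ρ(W − 11ᵀ/m)`, and `z_{t+1} := W^{t+1}z₀ + Σ_{s=0}^{t} Wˢ(W−I)ε_{t−s}`,
one has `‖z_{t+1} − (11ᵀ/m)z₀‖ ≤ λ₂^{t+1}·‖z₀ − (11ᵀ/m)z₀‖
+ Σ_{l=0}^{t} λ₂^{t−l}·‖W−I‖·‖ε_l − (11ᵀ/m)ε_l‖`. -/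
theorem prop2_deterministic_estimate {m : ℕ}
    (W : Matrix (Fin m) (Fin m) ℝ) (hsym : W.IsSymm)
    (hcol : Matrix.vecMul (fun _ => (1 : ℝ)) W = fun _ => 1)
    (hrow : W.mulVec (fun _ => (1 : ℝ)) = fun _ => 1)
    (hρ : spectralRadius ℝ (W - avgMat m) < 1)
    (lam2 : ℝ) (hlam2 : lam2 = (spectralRadius ℝ (W - avgMat m)).toReal)
    (z₀ : Fin m → ℝ) (ε : ℕ → Fin m → ℝ) (t : ℕ) (zt1 : Fin m → ℝ)
    (hz : zt1 = (W ^ (t + 1)).mulVec z₀ +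
        ∑ s ∈ Finset.range (t + 1), (W ^ s * (W - 1)).mulVec (ε (t - s))) :
    eucNorm (zt1 - (avgMat m).mulVec z₀) ≤
      lam2 ^ (t + 1) * eucNorm (z₀ - (avgMat m).mulVec z₀) +
      ∑ l ∈ Finset.range (t + 1),
        lam2 ^ (t - l) * spNorm (W - 1) * eucNorm (ε l - (avgMat m).mulVec (ε l)) :=
  prop2_deterministic_estimate_general W hsym hrow lam2 hlam2 z₀ ε t zt1 hz
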